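/- Exponential decrease of V along heavy ball solutions: let m ∈ (0,1), set ψ := mαγ/λ, assume ψ < λ (so that ν := ψ(ψ - λ) < 0), and set κ := min{(1 - m)ψ, 2(λ - ψ)} > 0. Then along every solution of the heavy ball system, d/dt [V(z₁(t), z₂(t))] ≤ -κ·V(z₁(t), z₂(t)) for all t ≥ 0. -/

import Mathlib

open scoped RealInnerProductSpace

/-!
With `e = z₁ - z₁*` and `u = ψ e + z₂`, the cross terms `⟪e, u⟫` in `V̇` cancel because
`ν = ψ (ψ - λ)`, leaving `V̇ = -(λ - ψ) ‖u‖² - ψ ν ‖e‖² - γ ψ ⟪∇L(z₁), e⟫`. Convexity bounds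
`⟪∇L(z₁), e⟫` below by `L(z₁) - L*`, and quadratic growth, through `γ α = ψ λ / m`, lets the
part `(1 - m) ψ` of that gap absorb the positive term `-ψ ν ‖e‖²`.
-/

section

variable {E : Type*} [NormedAddCommGroup E] [InnerProductSpace ℝ E] [CompleteSpace E]

theorem HasGradientAt.comp_hasDerivAt {L : E → ℝ} {g : E} {f : ℝ → E} {f' : E} {t : ℝ}
    (hL : HasGradientAt L g (f t)) (hf : HasDerivAt f f' t) :
    HasDerivAt (fun s => L (f s)) ⟪g, f'⟫ t := by
  have h := hL.hasFDerivAt.comp_hasDerivAt t hf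
  simp only [InnerProductSpace.toDual_apply_apply] at h
  exact h

theorem ConvexOn.inner_gradient_le_sub {L : E → ℝ} (hL : ConvexOn ℝ Set.univ L) {g x : E}
    (hg : HasGradientAt L g x) (y : E) : ⟪g, y - x⟫ ≤ L y - L x := by
  have hline : HasDerivAt (L ∘ AffineMap.lineMap x y) ⟪g, y - x⟫ (0 : ℝ) :=
    (by simpa using hg : HasGradientAt L g (AffineMap.lineMap x y (0 : ℝ))).comp_hasDerivAt
      AffineMap.hasDerivAt_lineMap
  simpa [slope] using (hL.comp_affineMap (AffineMap.lineMap x y)).le_slope_of_hasDerivAt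
    (Set.mem_univ 0) (Set.mem_univ 1) one_pos hline

noncomputable def heavyBallLyapunov (L : E → ℝ) (zs : E) (lam γ ψ : ℝ) (x v : E) : ℝ :=
  γ * (L x - L zs) + (1 / 2) * ‖ψ • (x - zs) + v‖ ^ 2 + (ψ * (ψ - lam) / 2) * ‖x - zs‖ ^ 2

theorem hasDerivAt_heavyBallLyapunov {L : E → ℝ} {zs g : E} {lam γ ψ t : ℝ}
    {z₁ z₂ : ℝ → E} (hL : HasGradientAt L g (z₁ t)) (hz₁ : HasDerivAt z₁ (z₂ t) t)
    (hz₂ : HasDerivAt z₂ (-(lam • z₂ t) - γ • g) t) :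
    HasDerivAt (fun s => heavyBallLyapunov L zs lam γ ψ (z₁ s) (z₂ s))
      (-(lam - ψ) * ‖ψ • (z₁ t - zs) + z₂ t‖ ^ 2 - ψ ^ 2 * (ψ - lam) * ‖z₁ t - zs‖ ^ 2
        - γ * ψ * ⟪g, z₁ t - zs⟫) t := by
  have he : HasDerivAt (fun s => z₁ s - zs) (z₂ t) t := hz₁.sub_const zs
  have hV : HasDerivAt (fun s => heavyBallLyapunov L zs lam γ ψ (z₁ s) (z₂ s))
      (γ * ⟪g, z₂ t⟫ + 1 / 2 * (2 * ⟪ψ • (z₁ t - zs) + z₂ t, ψ • z₂ t + (-(lam • z₂ t) - γ • g)⟫)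
        + ψ * (ψ - lam) / 2 * (2 * ⟪z₁ t - zs, z₂ t⟫)) t :=
    ((((hL.comp_hasDerivAt hz₁).sub_const (L zs)).const_mul γ).add
      (((he.const_smul ψ).add hz₂).norm_sq.const_mul (1 / 2))).add
      (he.norm_sq.const_mul (ψ * (ψ - lam) / 2))
  refine hV.congr_deriv ?_
  generalize z₁ t - zs = e
  generalize z₂ t = v
  simp only [← real_inner_self_eq_norm_sq, inner_add_left, inner_add_right, inner_sub_right,
    inner_neg_right, real_inner_smul_left, real_inner_smul_right, real_inner_comm e v,
    real_inner_comm g v, real_inner_comm g e]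
  ring

theorem heavyBall_dissipation_le {lam γ ψ κ m α A B ℓ g : ℝ} (hψ : 0 ≤ ψ) (hψlam : ψ ≤ lam)
    (hγ : 0 ≤ γ) (hα : 0 ≤ α) (hmαγ : ψ * lam = m * α * γ) (hm : 0 ≤ m) (hκ : 0 ≤ κ)
    (hκψ : κ ≤ (1 - m) * ψ) (hκlam : κ ≤ 2 * (lam - ψ)) (hA : 0 ≤ A) (hB : 0 ≤ B)
    (hℓ : α * B ≤ ℓ) (hg : ℓ ≤ g) :
    -(lam - ψ) * A - ψ ^ 2 * (ψ - lam) * B - γ * ψ * g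
      ≤ -κ * (γ * ℓ + (1 / 2) * A + (ψ * (ψ - lam) / 2) * B) := by
  have hκle : κ ≤ ψ := by linarith [mul_nonneg hm hψ]
  have h1 : 0 ≤ (lam - ψ - κ / 2) * A := mul_nonneg (by linarith) hA
  have h2 : 0 ≤ γ * ψ * (g - ℓ) := mul_nonneg (mul_nonneg hγ hψ) (by linarith)
  have h3 : 0 ≤ γ * (ψ - κ) * (ℓ - α * B) :=
    mul_nonneg (mul_nonneg hγ (by linarith)) (by linarith)
  have h4 : 0 ≤ γ * α * B * ((1 - m) * ψ - κ) := mul_nonneg (by positivity) (by linarith)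
  have h5 : 0 ≤ (κ / 2 * ψ * (lam - ψ) + ψ ^ 3) * B :=
    mul_nonneg (add_nonneg (mul_nonneg (by positivity) (by linarith)) (by positivity)) hB
  have h6 : γ * α * m * ψ * B = ψ ^ 2 * lam * B := by linear_combination -ψ * B * hmαγ
  linarith

end

theorem heavyBall_V_exponential_decrease_general {n : ℕ}
    (L : EuclideanSpace ℝ (Fin n) → ℝ)
    (hC1 : ContDiff ℝ 1 L)
    (hconv : ConvexOn ℝ Set.univ L)
    (zs : EuclideanSpace ℝ (Fin n))
    (α : ℝ) (hα : 0 < α)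
    (hQG : ∀ z, α * ‖z - zs‖ ^ 2 ≤ L z - L zs)
    (lam γ m : ℝ) (hlam : 0 < lam) (hγ : 0 < γ) (hm0 : 0 < m) (hm1 : m < 1)
    (hψlt : m * α * γ / lam < lam)
    (z₁ z₂ : ℝ → EuclideanSpace ℝ (Fin n))
    (hz₁ : ∀ t, 0 ≤ t → HasDerivAt z₁ (z₂ t) t)
    (hz₂ : ∀ t, 0 ≤ t →
      HasDerivAt z₂ (-(lam • z₂ t) - γ • gradient L (z₁ t)) t) :
    ∀ t, 0 ≤ t →
      deriv (fun s =>
          γ * (L (z₁ s) - L zs)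
            + (1 / 2) * ‖(m * α * γ / lam) • (z₁ s - zs) + z₂ s‖ ^ 2
            + ((m * α * γ / lam) * ((m * α * γ / lam) - lam) / 2)
                * ‖z₁ s - zs‖ ^ 2) t
        ≤ -(min ((1 - m) * (m * α * γ / lam)) (2 * (lam - m * α * γ / lam)))
            * (γ * (L (z₁ t) - L zs)
              + (1 / 2) * ‖(m * α * γ / lam) • (z₁ t - zs) + z₂ t‖ ^ 2
              + ((m * α * γ / lam) * ((m * α * γ / lam) - lam) / 2)
                  * ‖z₁ t - zs‖ ^ 2) := by
  intro t ht
  set ψ := m * α * γ / lam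
  have hψ : 0 < ψ := by positivity
  have hmαγ : ψ * lam = m * α * γ := div_mul_cancel₀ _ hlam.ne'
  have hgrad : HasGradientAt L (gradient L (z₁ t)) (z₁ t) :=
    (hC1.differentiable one_ne_zero (z₁ t)).hasGradientAt
  have hconvex : L (z₁ t) - L zs ≤ ⟪gradient L (z₁ t), z₁ t - zs⟫ := by
    have h := hconv.inner_gradient_le_sub hgrad zs
    rw [← neg_sub (z₁ t) zs, inner_neg_right] at h
    linarith
  show deriv (fun s => heavyBallLyapunov L zs lam γ ψ (z₁ s) (z₂ s)) t
    ≤ -min ((1 - m) * ψ) (2 * (lam - ψ)) * heavyBallLyapunov L zs lam γ ψ (z₁ t) (z₂ t)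
  rw [(hasDerivAt_heavyBallLyapunov hgrad (hz₁ t ht) (hz₂ t ht)).deriv]
  exact heavyBall_dissipation_le hψ.le hψlt.le hγ.le hα.le hmαγ hm0.le
    (le_min (mul_pos (sub_pos.2 hm1) hψ).le (by linarith)) (min_le_left _ _) (min_le_right _ _)
    (sq_nonneg _) (sq_nonneg _) (hQG (z₁ t)) hconvex

/-- Exponential decrease of `V` along heavy ball solutions: with `ψ = mαγ/λ < λ`
and `κ = min{(1-m)ψ, 2(λ-ψ)}`, `d/dt V(z(t)) ≤ -κ V(z(t))` for all `t ≥ 0`. -/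
theorem heavyBall_V_exponential_decrease {n : ℕ} (hn : 1 ≤ n)
    (L : EuclideanSpace ℝ (Fin n) → ℝ)
    (hC1 : ContDiff ℝ 1 L)
    (hconv : ConvexOn ℝ Set.univ L)
    (zs : EuclideanSpace ℝ (Fin n))
    (hmin : ∀ z, L zs ≤ L z)
    (huniq : ∀ z, (∀ y, L z ≤ L y) → z = zs)
    (α : ℝ) (hα : 0 < α)
    (hQG : ∀ z, α * ‖z - zs‖ ^ 2 ≤ L z - L zs)
    (lam γ m : ℝ) (hlam : 0 < lam) (hγ : 0 < γ) (hm0 : 0 < m) (hm1 : m < 1)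
    (hψlt : m * α * γ / lam < lam)
    (z₁ z₂ : ℝ → EuclideanSpace ℝ (Fin n))
    (hz₁ : ∀ t, 0 ≤ t → HasDerivAt z₁ (z₂ t) t)
    (hz₂ : ∀ t, 0 ≤ t →
      HasDerivAt z₂ (-(lam • z₂ t) - γ • gradient L (z₁ t)) t) :
    ∀ t, 0 ≤ t →
      deriv (fun s =>
          γ * (L (z₁ s) - L zs)
            + (1 / 2) * ‖(m * α * γ / lam) • (z₁ s - zs) + z₂ s‖ ^ 2
            + ((m * α * γ / lam) * ((m * α * γ / lam) - lam) / 2)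
                * ‖z₁ s - zs‖ ^ 2) t
        ≤ -(min ((1 - m) * (m * α * γ / lam)) (2 * (lam - m * α * γ / lam)))
            * (γ * (L (z₁ t) - L zs)
              + (1 / 2) * ‖(m * α * γ / lam) • (z₁ t - zs) + z₂ t‖ ^ 2
              + ((m * α * γ / lam) * ((m * α * γ / lam) - lam) / 2)
                  * ‖z₁ t - zs‖ ^ 2) :=
  heavyBall_V_exponential_decrease_general L hC1 hconv zs α hα hQG lam γ m hlam hγ hm0 hm1 hψlt z₁
    z₂ hz₁ hz₂
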